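/- Let n = ∏_{i=1}^{s} p_i^{k_i} and let t, x be positive integers with gcd(σ_x(n)+t, n^x) = 1. Suppose there exists j with 1 ≤ j ≤ s such that p_j^x < (1/t)·σ_x(n/p_j^{k_j}), and σ_x(p_j^{k_j}) has a divisor of the form d^x > 1 (d a positive integer) with gcd(d^x, n^x·t) = 1. Then (σ_x(n)+t)/n^x is an x-th abundancy outlaw. -/

import Mathlib

/-!
Suppose `I(a) = (σ_x(n) + t) / n^x`. As the fraction is in lowest terms, `n ∣ a`; write
`n = P^K M` with `P = p_j` and `P ∤ M`. Since `I` is monotone along divisibility, it suffices to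
find a multiple `n q ∣ a` with `I(n q)` above the target. If `P^(K+1) ∣ a`, take `q = P`: as
`σ_x(P^(K+1)) = 1 + P^x σ_x(P^K)`, this needs exactly `P^x t < σ_x(M)`. Otherwise `P^K ∥ a`, so
`d^x ∣ σ_x(P^K) ∣ σ_x(a)`. If `d` is coprime to `a`, the equation `σ_x(a) n^x = (σ_x(n) + t) a^x`
gives `d^x ∣ σ_x(n) + t`, hence `d^x ∣ t`, which is impossible. Otherwise some prime `r ∣ d`
divides `a` but not `n`, and `q = r` works because `t r^x ≤ t σ_x(P^K) < σ_x(P^K) σ_x(M) = σ_x(n)`.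
-/

open Finset Nat

/-- Sum of x-th powers of divisors. -/
def sigmaX (x n : ℕ) : ℕ := ∑ d ∈ n.divisors, d ^ x

/-- The x-th abundancy index as a rational number. -/
def Iq (x n : ℕ) : ℚ := (sigmaX x n : ℚ) / (n : ℚ) ^ x

theorem sigmaX_eq_sigma (x n : ℕ) : sigmaX x n = ArithmeticFunction.sigma x n :=
  ArithmeticFunction.sigma_apply.symm

theorem sigmaX_mul_of_coprime (x : ℕ) {a b : ℕ} (h : Coprime a b) :
    sigmaX x (a * b) = sigmaX x a * sigmaX x b := by
  simp only [sigmaX_eq_sigma]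
  exact ArithmeticFunction.isMultiplicative_sigma.map_mul_of_coprime h

theorem sigmaX_pos (x : ℕ) {m : ℕ} (hm : m ≠ 0) : 0 < sigmaX x m :=
  sigmaX_eq_sigma x m ▸ ArithmeticFunction.sigma_pos x m hm

theorem sigmaX_prime (x : ℕ) {r : ℕ} (hr : r.Prime) : sigmaX x r = 1 + r ^ x := by
  rw [sigmaX, hr.divisors, sum_pair hr.one_lt.ne, one_pow]

theorem sigmaX_prime_pow_succ (x : ℕ) {P : ℕ} (hP : P.Prime) (K : ℕ) :
    sigmaX x (P ^ (K + 1)) = 1 + P ^ x * sigmaX x (P ^ K) := by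
  simp only [sigmaX_eq_sigma, ArithmeticFunction.sigma_apply_prime_pow hP]
  rw [sum_range_succ', mul_sum, add_comm]
  congr 1
  · simp
  · exact sum_congr rfl fun i _ => by ring

theorem sigmaX_prime_pow_dvd_of_not_dvd (x : ℕ) {P K a : ℕ} (hP : P.Prime)
    (hK : P ^ K ∣ a) (hK1 : ¬ P ^ (K + 1) ∣ a) : sigmaX x (P ^ K) ∣ sigmaX x a := by
  obtain ⟨c, rfl⟩ := hK
  have hPc : ¬ P ∣ c := fun h => hK1 (pow_succ P K ▸ mul_dvd_mul_left _ h)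
  rw [sigmaX_mul_of_coprime x ((hP.coprime_iff_not_dvd.2 hPc).pow_left K)]
  exact dvd_mul_right _ _

theorem Iq_eq_sum_inv (x m : ℕ) : Iq x m = ∑ d ∈ m.divisors, ((d : ℚ) ^ x)⁻¹ := by
  rw [Iq, sigmaX, Nat.cast_sum, sum_div, ← Nat.sum_div_divisors m (fun d => ((d : ℚ) ^ x)⁻¹)]
  refine sum_congr rfl fun d hd => ?_
  have hd0 : (d : ℚ) ≠ 0 := by exact_mod_cast (Nat.pos_of_mem_divisors hd).ne'
  rw [Nat.cast_div (Nat.dvd_of_mem_divisors hd) hd0, div_pow, inv_div, Nat.cast_pow]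

theorem Iq_le_Iq_of_dvd (x : ℕ) {a b : ℕ} (ha : 0 < a) (hba : b ∣ a) : Iq x b ≤ Iq x a := by
  rw [Iq_eq_sum_inv, Iq_eq_sum_inv]
  exact sum_le_sum_of_subset_of_nonneg (Nat.divisors_subset_of_dvd ha.ne' hba)
    fun _ _ _ => by positivity

theorem sigmaX_mul_pow_eq_of_Iq_eq (x : ℕ) {a n N : ℕ} (ha : 0 < a) (hn : 0 < n)
    (h : Iq x a = N / (n : ℚ) ^ x) : sigmaX x a * n ^ x = N * a ^ x := by
  rw [Iq, div_eq_div_iff (by positivity) (by positivity)] at h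
  exact_mod_cast h

/-- `hlt` is `N / n^x < I(n q)` with denominators cleared; `I(n q) ≤ I(a)` since `n q ∣ a`. -/
theorem Iq_ne_of_mul_dvd (x : ℕ) {a n q N : ℕ} (ha : 0 < a) (hn : 0 < n) (hq : 0 < q)
    (hnq : n * q ∣ a) (hlt : N * q ^ x < sigmaX x (n * q)) : Iq x a ≠ N / (n : ℚ) ^ x := by
  refine (lt_of_lt_of_le ?_ (Iq_le_Iq_of_dvd x ha hnq)).ne'
  rw [Iq, div_lt_div_iff₀ (by positivity) (by positivity)]
  have hlt' : (N : ℚ) * (q : ℚ) ^ x < sigmaX x (n * q) := by exact_mod_cast hlt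
  calc (N : ℚ) * ((n * q : ℕ) : ℚ) ^ x = N * q ^ x * n ^ x := by push_cast; ring
    _ < sigmaX x (n * q) * n ^ x := mul_lt_mul_of_pos_right hlt' (by positivity)

theorem Iq_ne_of_prime_dvd_of_not_dvd (x : ℕ) {a n r t : ℕ} (ha : 0 < a) (hn : 0 < n)
    (hr : r.Prime) (hrn : ¬ r ∣ n) (hna : n ∣ a) (hra : r ∣ a) (hlt : t * r ^ x < sigmaX x n) :
    Iq x a ≠ (sigmaX x n + t : ℚ) / (n : ℚ) ^ x := by
  have hcop : Coprime n r := (hr.coprime_iff_not_dvd.2 hrn).symm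
  have key := Iq_ne_of_mul_dvd x (N := sigmaX x n + t) ha hn hr.pos
    (hcop.mul_dvd_of_dvd_of_dvd hna hra) (by
      rw [sigmaX_mul_of_coprime x hcop, sigmaX_prime x hr]
      nlinarith)
  exact_mod_cast key

theorem Iq_ne_of_prime_pow_succ_dvd (x : ℕ) {a t P K M : ℕ} (ha : 0 < a) (hP : P.Prime)
    (hM : 0 < M) (hPM : Coprime P M) (hna : P ^ K * M ∣ a) (hPa : P ^ (K + 1) ∣ a)
    (htM : P ^ x * t < sigmaX x M) :
    Iq x a ≠ (sigmaX x (P ^ K * M) + t : ℚ) / ((P ^ K * M : ℕ) : ℚ) ^ x := by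
  have hnP : P ^ K * M * P = P ^ (K + 1) * M := by ring
  have key := Iq_ne_of_mul_dvd x (N := sigmaX x (P ^ K * M) + t) ha
    (Nat.mul_pos (pow_pos hP.pos K) hM) hP.pos
    (hnP ▸ (hPM.pow_left (K + 1)).mul_dvd_of_dvd_of_dvd hPa (dvd_of_mul_left_dvd hna)) (by
      rw [hnP, sigmaX_mul_of_coprime x (hPM.pow_left _), sigmaX_mul_of_coprime x (hPM.pow_left _),
        sigmaX_prime_pow_succ x hP]
      nlinarith)
  exact_mod_cast key

theorem Iq_ne_sigmaX_add_div_pow {x t P K M d : ℕ} (hx : 0 < x) (hP : P.Prime) (hM : 0 < M)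
    (hPM : Coprime P M) (hcop : Coprime (sigmaX x (P ^ K * M) + t) ((P ^ K * M) ^ x))
    (htM : P ^ x * t < sigmaX x M) (hd1 : 1 < d ^ x) (hddvd : d ^ x ∣ sigmaX x (P ^ K))
    (hdnt : Coprime (d ^ x) ((P ^ K * M) ^ x * t)) {a : ℕ} (ha : 0 < a) :
    Iq x a ≠ (sigmaX x (P ^ K * M) + t : ℚ) / ((P ^ K * M : ℕ) : ℚ) ^ x := by
  set n := P ^ K * M
  intro h
  have hn0 : 0 < n := Nat.mul_pos (pow_pos hP.pos K) hM
  have heq := sigmaX_mul_pow_eq_of_Iq_eq x (N := sigmaX x n + t) ha hn0 (by exact_mod_cast h)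
  have hna : n ∣ a := (Nat.pow_dvd_pow_iff hx.ne').1
    (hcop.symm.dvd_of_dvd_mul_left (Dvd.intro_left _ heq))
  by_cases hPa : P ^ (K + 1) ∣ a
  · exact Iq_ne_of_prime_pow_succ_dvd x ha hP hM hPM hna hPa htM h
  have hσn : sigmaX x n = sigmaX x (P ^ K) * sigmaX x M := sigmaX_mul_of_coprime x (hPM.pow_left K)
  have hdσa : d ^ x ∣ sigmaX x a :=
    hddvd.trans (sigmaX_prime_pow_dvd_of_not_dvd x hP (dvd_of_mul_right_dvd hna) hPa)
  by_cases hda : Coprime d a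
  · have hdN : d ^ x ∣ sigmaX x n + t :=
      (hda.pow x x).dvd_of_dvd_mul_right (heq ▸ dvd_mul_of_dvd_left hdσa _)
    have hdt : d ^ x ∣ t := (Nat.dvd_add_right (hσn ▸ dvd_mul_of_dvd_left hddvd _)).1 hdN
    have hd1' : d ^ x ∣ 1 := hdnt ▸ Nat.dvd_gcd dvd_rfl (dvd_mul_of_dvd_right hdt _)
    exact hd1.ne' (Nat.dvd_one.1 hd1')
  obtain ⟨r, hr, hrd, hra⟩ := Nat.Prime.not_coprime_iff_dvd.1 hda
  have hrn : ¬ r ∣ n := fun hrn => hr.one_lt.ne' <| Nat.dvd_one.1 <|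
    hdnt ▸ Nat.dvd_gcd (dvd_pow hrd hx.ne') (dvd_mul_of_dvd_left (dvd_pow hrn hx.ne') t)
  refine Iq_ne_of_prime_dvd_of_not_dvd x ha hn0 hr hrn hna hra ?_ h
  have hd0 : 0 < d := Nat.pos_of_ne_zero fun hd => by simp [hd, hx.ne'] at hd1
  have hrσ : r ^ x ≤ sigmaX x (P ^ K) := (Nat.pow_le_pow_left (Nat.le_of_dvd hd0 hrd) x).trans
    (Nat.le_of_dvd (sigmaX_pos x (pow_pos hP.pos K).ne') hddvd)
  have htM' : t < sigmaX x M := lt_of_le_of_lt (Nat.le_mul_of_pos_left t (pow_pos hP.pos x)) htM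
  calc t * r ^ x ≤ t * sigmaX x (P ^ K) := Nat.mul_le_mul_left t hrσ
    _ < sigmaX x M * sigmaX x (P ^ K) :=
      Nat.mul_lt_mul_of_pos_right htM' (sigmaX_pos x (pow_pos hP.pos K).ne')
    _ = sigmaX x n := by rw [hσn, mul_comm]

theorem stmt_12_general (x t s : ℕ) (hx : 0 < x) (ht : 0 < t)
    (p : Fin s → ℕ) (k : Fin s → ℕ)
    (hp : ∀ i, (p i).Prime) (hinj : Function.Injective p)
    (n : ℕ) (hn : n = ∏ i, p i ^ k i)
    (hcop : Nat.gcd (sigmaX x n + t) (n ^ x) = 1)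
    (j : Fin s)
    (hpj : (p j : ℚ) ^ x < (1 / (t : ℚ)) * (sigmaX x (n / p j ^ k j) : ℚ))
    (d : ℕ) (hd1 : 1 < d ^ x) (hddvd : d ^ x ∣ sigmaX x (p j ^ k j))
    (hdnt : Nat.gcd (d ^ x) (n ^ x * t) = 1) :
    ¬ ∃ a : ℕ, 0 < a ∧ Iq x a = (sigmaX x n + t : ℚ) / (n : ℚ) ^ x := by
  rintro ⟨a, ha, h⟩
  set M := ∏ i ∈ univ.erase j, p i ^ k i
  have hnM : n = p j ^ k j * M := hn.trans (mul_prod_erase univ _ (mem_univ j)).symm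
  have hM : 0 < M := prod_pos fun i _ => pow_pos (hp i).pos _
  have hPM : Coprime (p j) M := Coprime.prod_right fun i hi =>
    ((coprime_primes (hp j) (hp i)).2 (hinj.ne (ne_of_mem_erase hi).symm)).pow_right _
  have htM : p j ^ x * t < sigmaX x M := by
    rw [hnM, Nat.mul_div_cancel_left _ (pow_pos (hp j).pos _), one_div, inv_mul_eq_div,
      lt_div_iff₀ (by exact_mod_cast ht)] at hpj
    exact_mod_cast hpj
  subst hnM
  exact Iq_ne_sigmaX_add_div_pow hx (hp j) hM hPM hcop htM hd1 hddvd hdnt ha (by exact_mod_cast h)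

theorem stmt_12 (x t s : ℕ) (hx : 0 < x) (ht : 0 < t) (hs : 0 < s)
    (p : Fin s → ℕ) (k : Fin s → ℕ)
    (hp : ∀ i, (p i).Prime) (hinj : Function.Injective p) (hk : ∀ i, 0 < k i)
    (n : ℕ) (hn : n = ∏ i, p i ^ k i)
    (hcop : Nat.gcd (sigmaX x n + t) (n ^ x) = 1)
    (j : Fin s)
    (hpj : (p j : ℚ) ^ x < (1 / (t : ℚ)) * (sigmaX x (n / p j ^ k j) : ℚ))
    (d : ℕ) (hd1 : 1 < d ^ x) (hddvd : d ^ x ∣ sigmaX x (p j ^ k j))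
    (hdnt : Nat.gcd (d ^ x) (n ^ x * t) = 1) :
    ¬ ∃ a : ℕ, 0 < a ∧ Iq x a = (sigmaX x n + t : ℚ) / (n : ℚ) ^ x :=
  stmt_12_general x t s hx ht p k hp hinj n hn hcop j hpj d hd1 hddvd hdnt
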